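/- Under the rank condition, each of the matrices T·Ψ₀, T·Λ₁, T·Λ₂, T·Λ₄, T·Ψ_R and T·Λ_R is symmetric and idempotent. -/

import Mathlib

open Matrix

variable {T G k₁ k₂ : ℕ}

/-- Orthogonal projection `P̄[A] = A(AᵀA)⁻¹Aᵀ` onto the column space of `A`. -/
noncomputable def projM {n : Type*} [Fintype n] [DecidableEq n]
    (A : Matrix (Fin T) n ℝ) : Matrix (Fin T) (Fin T) ℝ :=
  A * (Aᵀ * A)⁻¹ * Aᵀ

/-- The annihilator `M̄[A] = I - P̄[A]`. -/
noncomputable def annM {n : Type*} [Fintype n] [DecidableEq n]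
    (A : Matrix (Fin T) n ℝ) : Matrix (Fin T) (Fin T) ℝ :=
  1 - projM A

noncomputable def M1 (X₁ : Matrix (Fin T) (Fin k₁) ℝ) : Matrix (Fin T) (Fin T) ℝ :=
  annM X₁

noncomputable def Pm (X₁ : Matrix (Fin T) (Fin k₁) ℝ) (X₂ : Matrix (Fin T) (Fin k₂) ℝ) :
    Matrix (Fin T) (Fin T) ℝ :=
  projM (fromCols X₁ X₂)

noncomputable def Mm (X₁ : Matrix (Fin T) (Fin k₁) ℝ) (X₂ : Matrix (Fin T) (Fin k₂) ℝ) :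
    Matrix (Fin T) (Fin T) ℝ :=
  annM (fromCols X₁ X₂)

noncomputable def N1 (X₁ : Matrix (Fin T) (Fin k₁) ℝ) (X₂ : Matrix (Fin T) (Fin k₂) ℝ) :
    Matrix (Fin T) (Fin T) ℝ :=
  M1 X₁ * Pm X₁ X₂

noncomputable def B1 (Y : Matrix (Fin T) (Fin G) ℝ) (X₁ : Matrix (Fin T) (Fin k₁) ℝ) :
    Matrix (Fin G) (Fin T) ℝ :=
  (Yᵀ * M1 X₁ * Y)⁻¹ * (Yᵀ * M1 X₁)

noncomputable def B2 (Y : Matrix (Fin T) (Fin G) ℝ) (X₁ : Matrix (Fin T) (Fin k₁) ℝ)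
    (X₂ : Matrix (Fin T) (Fin k₂) ℝ) : Matrix (Fin G) (Fin T) ℝ :=
  (Yᵀ * N1 X₁ X₂ * Y)⁻¹ * (Yᵀ * N1 X₁ X₂)

noncomputable def C1 (Y : Matrix (Fin T) (Fin G) ℝ) (X₁ : Matrix (Fin T) (Fin k₁) ℝ)
    (X₂ : Matrix (Fin T) (Fin k₂) ℝ) : Matrix (Fin G) (Fin T) ℝ :=
  B2 Y X₁ X₂ - B1 Y X₁

/-- OLS estimator `β̂`. -/
noncomputable def betaOLS (y : Fin T → ℝ) (Y : Matrix (Fin T) (Fin G) ℝ)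
    (X₁ : Matrix (Fin T) (Fin k₁) ℝ) : Fin G → ℝ :=
  B1 Y X₁ *ᵥ y

/-- 2SLS estimator `β̃`. -/
noncomputable def beta2S (y : Fin T → ℝ) (Y : Matrix (Fin T) (Fin G) ℝ)
    (X₁ : Matrix (Fin T) (Fin k₁) ℝ) (X₂ : Matrix (Fin T) (Fin k₂) ℝ) : Fin G → ℝ :=
  B2 Y X₁ X₂ *ᵥ y

noncomputable def OmIV (Y : Matrix (Fin T) (Fin G) ℝ) (X₁ : Matrix (Fin T) (Fin k₁) ℝ)
    (X₂ : Matrix (Fin T) (Fin k₂) ℝ) : Matrix (Fin G) (Fin G) ℝ :=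
  (T : ℝ)⁻¹ • (Yᵀ * N1 X₁ X₂ * Y)

noncomputable def OmLS (Y : Matrix (Fin T) (Fin G) ℝ) (X₁ : Matrix (Fin T) (Fin k₁) ℝ) :
    Matrix (Fin G) (Fin G) ℝ :=
  (T : ℝ)⁻¹ • (Yᵀ * M1 X₁ * Y)

noncomputable def SigV (Y : Matrix (Fin T) (Fin G) ℝ) (X₁ : Matrix (Fin T) (Fin k₁) ℝ)
    (X₂ : Matrix (Fin T) (Fin k₂) ℝ) : Matrix (Fin G) (Fin G) ℝ :=
  (T : ℝ)⁻¹ • (Yᵀ * Mm X₁ X₂ * Y)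

noncomputable def Dhat (Y : Matrix (Fin T) (Fin G) ℝ) (X₁ : Matrix (Fin T) (Fin k₁) ℝ)
    (X₂ : Matrix (Fin T) (Fin k₂) ℝ) : Matrix (Fin G) (Fin G) ℝ :=
  (OmIV Y X₁ X₂)⁻¹ - (OmLS Y X₁)⁻¹

noncomputable def Psi0 (Y : Matrix (Fin T) (Fin G) ℝ) (X₁ : Matrix (Fin T) (Fin k₁) ℝ)
    (X₂ : Matrix (Fin T) (Fin k₂) ℝ) : Matrix (Fin T) (Fin T) ℝ :=
  (C1 Y X₁ X₂)ᵀ * (Dhat Y X₁ X₂)⁻¹ * C1 Y X₁ X₂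

noncomputable def N2 (Y : Matrix (Fin T) (Fin G) ℝ) (X₁ : Matrix (Fin T) (Fin k₁) ℝ)
    (X₂ : Matrix (Fin T) (Fin k₂) ℝ) : Matrix (Fin T) (Fin T) ℝ :=
  1 - M1 X₁ * Y * B2 Y X₁ X₂

noncomputable def Lam1 (Y : Matrix (Fin T) (Fin G) ℝ) (X₁ : Matrix (Fin T) (Fin k₁) ℝ)
    (X₂ : Matrix (Fin T) (Fin k₂) ℝ) : Matrix (Fin T) (Fin T) ℝ :=
  (T : ℝ)⁻¹ • (N1 X₁ X₂ * annM (N1 X₁ X₂ * Y) * N1 X₁ X₂)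

noncomputable def Lam2 (Y : Matrix (Fin T) (Fin G) ℝ) (X₁ : Matrix (Fin T) (Fin k₁) ℝ)
    (X₂ : Matrix (Fin T) (Fin k₂) ℝ) : Matrix (Fin T) (Fin T) ℝ :=
  M1 X₁ * ((T : ℝ)⁻¹ • annM (M1 X₁ * Y) - Psi0 Y X₁ X₂) * M1 X₁

noncomputable def Lam3 (Y : Matrix (Fin T) (Fin G) ℝ) (X₁ : Matrix (Fin T) (Fin k₁) ℝ)
    (X₂ : Matrix (Fin T) (Fin k₂) ℝ) : Matrix (Fin T) (Fin T) ℝ :=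
  (T : ℝ)⁻¹ • (M1 X₁ * (N2 Y X₁ X₂)ᵀ * N2 Y X₁ X₂ * M1 X₁)

noncomputable def Lam4 (Y : Matrix (Fin T) (Fin G) ℝ) (X₁ : Matrix (Fin T) (Fin k₁) ℝ) :
    Matrix (Fin T) (Fin T) ℝ :=
  (T : ℝ)⁻¹ • (M1 X₁ * annM (M1 X₁ * Y) * M1 X₁)

def Ybar (Y : Matrix (Fin T) (Fin G) ℝ) (X₁ : Matrix (Fin T) (Fin k₁) ℝ) :
    Matrix (Fin T) (Fin G ⊕ Fin k₁) ℝ :=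
  fromCols Y X₁

def Zfull (Y : Matrix (Fin T) (Fin G) ℝ) (X₁ : Matrix (Fin T) (Fin k₁) ℝ)
    (X₂ : Matrix (Fin T) (Fin k₂) ℝ) : Matrix (Fin T) (Fin G ⊕ (Fin k₁ ⊕ Fin k₂)) ℝ :=
  fromCols Y (fromCols X₁ X₂)

noncomputable def PsiR (Y : Matrix (Fin T) (Fin G) ℝ) (X₁ : Matrix (Fin T) (Fin k₁) ℝ)
    (X₂ : Matrix (Fin T) (Fin k₂) ℝ) : Matrix (Fin T) (Fin T) ℝ :=
  (T : ℝ)⁻¹ • (annM (Ybar Y X₁) - annM (Zfull Y X₁ X₂))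

noncomputable def LamR (Y : Matrix (Fin T) (Fin G) ℝ) (X₁ : Matrix (Fin T) (Fin k₁) ℝ)
    (X₂ : Matrix (Fin T) (Fin k₂) ℝ) : Matrix (Fin T) (Fin T) ℝ :=
  (T : ℝ)⁻¹ • annM (Zfull Y X₁ X₂)

/-- `σ̂² = (1/T)(y−Yβ̂)ᵀM₁(y−Yβ̂)`. -/
noncomputable def sigHat2 (y : Fin T → ℝ) (Y : Matrix (Fin T) (Fin G) ℝ)
    (X₁ : Matrix (Fin T) (Fin k₁) ℝ) : ℝ :=
  (T : ℝ)⁻¹ * ((y - Y *ᵥ betaOLS y Y X₁) ⬝ᵥ (M1 X₁ *ᵥ (y - Y *ᵥ betaOLS y Y X₁)))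

/-- `σ̃² = (1/T)(y−Yβ̃)ᵀM₁(y−Yβ̃)`. -/
noncomputable def sigTil2 (y : Fin T → ℝ) (Y : Matrix (Fin T) (Fin G) ℝ)
    (X₁ : Matrix (Fin T) (Fin k₁) ℝ) (X₂ : Matrix (Fin T) (Fin k₂) ℝ) : ℝ :=
  (T : ℝ)⁻¹ * ((y - Y *ᵥ beta2S y Y X₁ X₂) ⬝ᵥ (M1 X₁ *ᵥ (y - Y *ᵥ beta2S y Y X₁ X₂)))

/-- `σ̃₁² = (1/T)(y−Yβ̃)ᵀN₁(y−Yβ̃)`. -/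
noncomputable def sigTil1sq (y : Fin T → ℝ) (Y : Matrix (Fin T) (Fin G) ℝ)
    (X₁ : Matrix (Fin T) (Fin k₁) ℝ) (X₂ : Matrix (Fin T) (Fin k₂) ℝ) : ℝ :=
  (T : ℝ)⁻¹ * ((y - Y *ᵥ beta2S y Y X₁ X₂) ⬝ᵥ (N1 X₁ X₂ *ᵥ (y - Y *ᵥ beta2S y Y X₁ X₂)))

/-- `σ̃₂² = σ̂² − (β̃−β̂)ᵀΔ̂⁻¹(β̃−β̂)`. -/
noncomputable def sigTil2sq (y : Fin T → ℝ) (Y : Matrix (Fin T) (Fin G) ℝ)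
    (X₁ : Matrix (Fin T) (Fin k₁) ℝ) (X₂ : Matrix (Fin T) (Fin k₂) ℝ) : ℝ :=
  sigHat2 y Y X₁ -
    (beta2S y Y X₁ X₂ - betaOLS y Y X₁) ⬝ᵥ
      ((Dhat Y X₁ X₂)⁻¹ *ᵥ (beta2S y Y X₁ X₂ - betaOLS y Y X₁))

/-- The rank condition: `X₁`, `X = [X₁, X₂]`, `[Y, X]` and `[P̄[X]Y, X₁]` all have
full column rank. -/
def RankCond (Y : Matrix (Fin T) (Fin G) ℝ) (X₁ : Matrix (Fin T) (Fin k₁) ℝ)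
    (X₂ : Matrix (Fin T) (Fin k₂) ℝ) : Prop :=
  X₁.rank = k₁ ∧ (fromCols X₁ X₂).rank = k₁ + k₂ ∧
    (fromCols Y (fromCols X₁ X₂)).rank = G + (k₁ + k₂) ∧
    (fromCols (Pm X₁ X₂ * Y) X₁).rank = G + k₁

/-!
After scaling by `T`, each of the six matrices is a difference `q - p` of orthogonal projections
with `q * p = p`, hence again an orthogonal projection. For `Λ₁`, `Λ₄`, `Ψ_R`, `Λ_R` this is
immediate. For `Ψ₀` and `Λ₂` one splits `M₁ = N₁ + M̄[X]` into orthogonal projections, so that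
`M₁Y = U + V` with `U = N₁Y`, `V = M̄[X]Y` and `UᵀV = 0`. Writing `A = UᵀU`, `W = VᵀV`, the
Gram matrix of `M₁Y` is `B = A + W`, so `(A⁻¹ - B⁻¹)⁻¹ = B W⁻¹ A`, and a direct computation gives
`TΨ₀ = P̄[U] + P̄[V] - P̄[U + V]` and `TΛ₂ = M₁ - P̄[U] - P̄[V]`.
-/

section FullColumnRank

variable {m n : Type*} [Fintype n]

theorem Matrix.mulVec_injective_of_rank_eq {A : Matrix m n ℝ} (h : A.rank = Fintype.card n) :
    Function.Injective A.mulVec := by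
  rw [Matrix.mulVec_injective_iff, linearIndependent_iff_card_eq_finrank_span, ← h,
    Matrix.rank_eq_finrank_span_cols]
  rfl

theorem Matrix.isUnit_transpose_mul_self [Fintype m] [DecidableEq n] {A : Matrix m n ℝ}
    (h : Function.Injective A.mulVec) : IsUnit (Aᵀ * A) := by
  rw [← Matrix.mulVec_injective_iff_isUnit, ← Matrix.coe_mulVecLin, ← LinearMap.ker_eq_bot,
    Matrix.ker_mulVecLin_transpose_mul_self, LinearMap.ker_eq_bot]
  exact h

theorem Matrix.mulVec_injective_fromCols_of_fromCols_fromCols {n' n'' : Type*} [Fintype n']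
    [Fintype n''] {A : Matrix m n ℝ} {B : Matrix m n' ℝ} {C : Matrix m n'' ℝ}
    (h : Function.Injective (fromCols A (fromCols B C)).mulVec) :
    Function.Injective (fromCols A B).mulVec := by
  rw [Matrix.mulVec_injective_iff] at h ⊢
  convert h.comp (Sum.map id Sum.inl)
    (Sum.map_injective.2 ⟨Function.injective_id, Sum.inl_injective⟩)
  ext j
  cases j <;> rfl

end FullColumnRank

theorem IsSelfAdjoint.mul_eq_left_of_mul_eq_right {R : Type*} [Mul R] [StarMul R] {p q : R}
    (hp : IsSelfAdjoint p) (hq : IsSelfAdjoint q) (hpq : p * q = q) : q * p = q := by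
  simpa only [star_mul, hp.star_eq, hq.star_eq] using congr(star $(hpq))

theorem IsStarProjection.mul_one_sub_mul_eq_sub {R : Type*} [Ring R] [StarRing R] {p q : R}
    (hp : IsStarProjection p) (hq : IsSelfAdjoint q) (hpq : p * q = q) :
    p * (1 - q) * p = p - q := by
  rw [mul_sub, mul_one, hpq, sub_mul, hp.isIdempotentElem.eq,
    hp.isSelfAdjoint.mul_eq_left_of_mul_eq_right hq hpq]

theorem Matrix.isStarProjection_iff {n : Type*} [Fintype n] {P : Matrix n n ℝ} :
    IsStarProjection P ↔ Pᵀ = P ∧ P * P = P := by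
  rw [_root_.isStarProjection_iff, and_comm, isSelfAdjoint_iff, star_eq_conjTranspose,
    conjTranspose_eq_transpose_of_trivial]
  rfl

theorem IsStarProjection.transpose_eq {n : Type*} [Fintype n] {P : Matrix n n ℝ}
    (hP : IsStarProjection P) : Pᵀ = P :=
  (Matrix.isStarProjection_iff.1 hP).1

theorem IsStarProjection.transpose_mul_mul_self {m n : Type*} [Fintype m] [Fintype n]
    {P : Matrix m m ℝ} (hP : IsStarProjection P) (A : Matrix m n ℝ) :
    (P * A)ᵀ * (P * A) = Aᵀ * P * A := by
  rw [transpose_mul, hP.transpose_eq, Matrix.mul_assoc, ← Matrix.mul_assoc P,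
    hP.isIdempotentElem.eq, Matrix.mul_assoc]

theorem Matrix.inv_smul_of_ne_zero {n K : Type*} [Fintype n] [DecidableEq n] [Field K] {c : K}
    (hc : c ≠ 0) (A : Matrix n n K) : (c • A)⁻¹ = c⁻¹ • A⁻¹ := by
  by_cases hA : IsUnit A.det
  · refine Matrix.inv_eq_left_inv ?_
    rw [Matrix.smul_mul, Matrix.mul_smul, smul_smul, inv_mul_cancel₀ hc, one_smul,
      nonsing_inv_mul _ hA]
  · have hcA : ¬IsUnit (c • A).det := by
      simpa [det_smul, isUnit_iff_ne_zero, hc] using hA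
    rw [nonsing_inv_apply_not_isUnit _ hA, nonsing_inv_apply_not_isUnit _ hcA, smul_zero]

section Projection

variable {ι κ : Type*} [Fintype ι] [DecidableEq ι]

theorem projM_transpose (A : Matrix (Fin T) ι ℝ) : (projM A)ᵀ = projM A := by
  rw [projM, transpose_mul, transpose_mul, transpose_nonsing_inv, transpose_mul,
    transpose_transpose, Matrix.mul_assoc]

theorem isSelfAdjoint_projM (A : Matrix (Fin T) ι ℝ) : IsSelfAdjoint (projM A) := by
  rw [isSelfAdjoint_iff, star_eq_conjTranspose, conjTranspose_eq_transpose_of_trivial,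
    projM_transpose]

theorem projM_mul_self {A : Matrix (Fin T) ι ℝ} (hA : IsUnit (Aᵀ * A)) : projM A * A = A := by
  simp only [projM, Matrix.mul_assoc]
  rw [Matrix.nonsing_inv_mul _ ((isUnit_iff_isUnit_det _).mp hA), Matrix.mul_one]

theorem mul_projM_of_mul_eq {N : Matrix (Fin T) (Fin T) ℝ} {A : Matrix (Fin T) ι ℝ}
    (h : N * A = A) : N * projM A = projM A := by
  rw [projM, ← Matrix.mul_assoc, ← Matrix.mul_assoc, h]

theorem isStarProjection_projM {A : Matrix (Fin T) ι ℝ} (hA : IsUnit (Aᵀ * A)) :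
    IsStarProjection (projM A) :=
  ⟨mul_projM_of_mul_eq (projM_mul_self hA), isSelfAdjoint_projM A⟩

theorem isStarProjection_annM {A : Matrix (Fin T) ι ℝ} (hA : IsUnit (Aᵀ * A)) :
    IsStarProjection (annM A) :=
  (isStarProjection_projM hA).one_sub

theorem projM_mul_eq_zero {A : Matrix (Fin T) ι ℝ} {B : Matrix (Fin T) κ ℝ}
    (h : Aᵀ * B = 0) : projM A * B = 0 := by
  rw [projM, Matrix.mul_assoc, h, Matrix.mul_zero]

variable [Fintype κ] [DecidableEq κ]

theorem projM_mul_projM_eq_zero {A : Matrix (Fin T) ι ℝ} {B : Matrix (Fin T) κ ℝ}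
    (h : Aᵀ * B = 0) : projM A * projM B = 0 := by
  rw [show projM B = B * ((Bᵀ * B)⁻¹ * Bᵀ) by rw [projM, Matrix.mul_assoc], ← Matrix.mul_assoc,
    projM_mul_eq_zero h, Matrix.zero_mul]

theorem projM_fromCols_mul_left_and_right {A : Matrix (Fin T) ι ℝ} {B : Matrix (Fin T) κ ℝ}
    (h : IsUnit ((fromCols A B)ᵀ * fromCols A B)) :
    projM (fromCols A B) * A = A ∧ projM (fromCols A B) * B = B := by
  have := projM_mul_self h
  rwa [mul_fromCols, fromCols_inj.eq_iff] at this

theorem IsStarProjection.mul_annM_mul_self_mul {P : Matrix (Fin T) (Fin T) ℝ}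
    (hP : IsStarProjection P) (A : Matrix (Fin T) ι ℝ) :
    P * annM (P * A) * P = P - projM (P * A) :=
  hP.mul_one_sub_mul_eq_sub (isSelfAdjoint_projM _)
    (mul_projM_of_mul_eq (by rw [← Matrix.mul_assoc, hP.isIdempotentElem.eq]))

theorem IsStarProjection.sub_projM_mul {P : Matrix (Fin T) (Fin T) ℝ} (hP : IsStarProjection P)
    {A : Matrix (Fin T) ι ℝ} (hA : IsUnit ((P * A)ᵀ * (P * A))) :
    IsStarProjection (P - projM (P * A)) :=
  (isStarProjection_projM hA).sub_of_mul_eq_right hP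
    (mul_projM_of_mul_eq (by rw [← Matrix.mul_assoc, hP.isIdempotentElem.eq]))

end Projection

theorem mulVec_injective_annM_mul {ι κ : Type*} [Fintype ι] [Fintype κ] [DecidableEq κ]
    {A : Matrix (Fin T) ι ℝ} {B : Matrix (Fin T) κ ℝ}
    (h : Function.Injective (fromCols A B).mulVec) : Function.Injective (annM B * A).mulVec := by
  rw [← Matrix.coe_mulVecLin, injective_iff_map_eq_zero]
  intro v hv
  rw [Matrix.mulVecLin_apply, ← mulVec_mulVec, annM, sub_mulVec, one_mulVec, sub_eq_zero,
    projM, ← mulVec_mulVec, ← mulVec_mulVec] at hv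
  have hAB : fromCols A B *ᵥ Sum.elim v (-((Bᵀ * B)⁻¹ *ᵥ (Bᵀ *ᵥ (A *ᵥ v)))) = 0 := by
    rw [fromCols_mulVec_sumElim, mulVec_neg, ← hv, add_neg_cancel]
  funext i
  exact congrFun (h (hAB.trans (mulVec_zero _).symm)) (Sum.inl i)

theorem Matrix.inv_sub_inv_add_inv {n R : Type*} [Fintype n] [DecidableEq n] [CommRing R]
    {A W : Matrix n n R} (hA : IsUnit A.det) (hW : IsUnit W.det) (hAW : IsUnit (A + W).det) :
    (A⁻¹ - (A + W)⁻¹)⁻¹ = (A + W) * W⁻¹ * A := by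
  refine Matrix.inv_eq_right_inv ?_
  simp only [Matrix.sub_mul, Matrix.mul_assoc]
  rw [Matrix.nonsing_inv_mul_cancel_left _ _ hAW, Matrix.add_mul, Matrix.mul_add,
    Matrix.nonsing_inv_mul_cancel_left _ _ hA, Matrix.mul_nonsing_inv_cancel_left _ _ hW,
    Matrix.nonsing_inv_mul _ hA]
  abel

theorem Matrix.hausman_identity {m n : Type*} [Fintype n] [DecidableEq n]
    {A W : Matrix n n ℝ} (U V : Matrix m n ℝ)
    (dA : IsUnit A.det) (dW : IsUnit W.det) (dB : IsUnit (A + W).det) :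
    (U * A⁻¹ - (U + V) * (A + W)⁻¹) * ((A + W) * W⁻¹ * A) *
        (A⁻¹ * Uᵀ - (A + W)⁻¹ * (U + V)ᵀ) =
      U * A⁻¹ * Uᵀ + V * W⁻¹ * Vᵀ - (U + V) * (A + W)⁻¹ * (U + V)ᵀ := by
  set B := A + W with hBdef
  have h1 : (U * A⁻¹ - (U + V) * B⁻¹) * B = U * (A⁻¹ * W) - V := by
    rw [Matrix.sub_mul, Matrix.mul_assoc, Matrix.mul_assoc (U + V), Matrix.nonsing_inv_mul _ dB,
      Matrix.mul_one, hBdef, Matrix.mul_add A⁻¹, Matrix.nonsing_inv_mul _ dA, Matrix.mul_add,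
      Matrix.mul_one]
    abel
  have h2 : W⁻¹ * (A * (A⁻¹ * Uᵀ - B⁻¹ * (U + V)ᵀ)) = B⁻¹ * (U + V)ᵀ - W⁻¹ * Vᵀ := by
    have hA : A = B - W := by rw [hBdef]; abel
    rw [Matrix.mul_sub A, Matrix.mul_nonsing_inv_cancel_left _ _ dA, ← Matrix.mul_assoc A, hA,
      Matrix.sub_mul, Matrix.mul_nonsing_inv _ dB, Matrix.sub_mul, Matrix.one_mul,
      Matrix.mul_assoc W, Matrix.mul_sub, Matrix.mul_sub, Matrix.nonsing_inv_mul_cancel_left _ _ dW,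
      transpose_add, Matrix.mul_add W⁻¹]
    abel
  have h3 : A⁻¹ * W * B⁻¹ = A⁻¹ - B⁻¹ := by
    have hW : W = B - A := by rw [hBdef]; abel
    rw [hW, Matrix.mul_sub, Matrix.sub_mul, Matrix.nonsing_inv_mul _ dA, Matrix.one_mul,
      Matrix.mul_nonsing_inv_cancel_right _ _ dB]
  calc (U * A⁻¹ - (U + V) * B⁻¹) * (B * W⁻¹ * A) * (A⁻¹ * Uᵀ - B⁻¹ * (U + V)ᵀ)
      = ((U * A⁻¹ - (U + V) * B⁻¹) * B) * (W⁻¹ * (A * (A⁻¹ * Uᵀ - B⁻¹ * (U + V)ᵀ))) := by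
        simp only [Matrix.mul_assoc]
    _ = (U * (A⁻¹ * W) - V) * (B⁻¹ * (U + V)ᵀ - W⁻¹ * Vᵀ) := by rw [h1, h2]
    _ = U * (A⁻¹ * W * B⁻¹) * (U + V)ᵀ - U * A⁻¹ * (W * W⁻¹) * Vᵀ
          - V * B⁻¹ * (U + V)ᵀ + V * W⁻¹ * Vᵀ := by
        simp only [Matrix.mul_sub, Matrix.sub_mul, Matrix.mul_assoc]
        abel
    _ = U * A⁻¹ * Uᵀ + V * W⁻¹ * Vᵀ - (U + V) * B⁻¹ * (U + V)ᵀ := by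
        rw [h3, Matrix.mul_nonsing_inv _ dW, transpose_add]
        simp only [Matrix.mul_one, Matrix.mul_sub, Matrix.sub_mul, Matrix.mul_add, Matrix.add_mul,
          Matrix.mul_assoc]
        abel

theorem transpose_add_mul_add_of_transpose_mul_eq_zero {ι : Type*} {U V : Matrix (Fin T) ι ℝ}
    (hUV : Uᵀ * V = 0) : (U + V)ᵀ * (U + V) = Uᵀ * U + Vᵀ * V := by
  rw [transpose_add, Matrix.add_mul, Matrix.mul_add, Matrix.mul_add, hUV,
    ← transpose_transpose (Vᵀ * U), transpose_mul, transpose_transpose, hUV, transpose_zero,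
    add_zero, zero_add]

section Orthogonal

variable {ι : Type*} [Fintype ι] [DecidableEq ι]

theorem transpose_mul_inv_sub_inv_inv_mul_eq {U V : Matrix (Fin T) ι ℝ} (hUV : Uᵀ * V = 0)
    (hU : IsUnit (Uᵀ * U)) (hV : IsUnit (Vᵀ * V)) (hUV' : IsUnit ((U + V)ᵀ * (U + V))) :
    ((Uᵀ * U)⁻¹ * Uᵀ - ((U + V)ᵀ * (U + V))⁻¹ * (U + V)ᵀ)ᵀ *
        ((Uᵀ * U)⁻¹ - ((U + V)ᵀ * (U + V))⁻¹)⁻¹ *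
        ((Uᵀ * U)⁻¹ * Uᵀ - ((U + V)ᵀ * (U + V))⁻¹ * (U + V)ᵀ) =
      projM U + projM V - projM (U + V) := by
  have hsymm : ∀ S : Matrix (Fin T) ι ℝ, (Sᵀ * S)ᵀ = Sᵀ * S := fun S => by
    rw [transpose_mul, transpose_transpose]
  have hCt : ((Uᵀ * U)⁻¹ * Uᵀ - ((U + V)ᵀ * (U + V))⁻¹ * (U + V)ᵀ)ᵀ =
      U * (Uᵀ * U)⁻¹ - (U + V) * ((U + V)ᵀ * (U + V))⁻¹ := by
    rw [transpose_sub, transpose_mul, transpose_mul, transpose_transpose, transpose_transpose,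
      transpose_nonsing_inv, transpose_nonsing_inv, hsymm, hsymm]
  have hB := transpose_add_mul_add_of_transpose_mul_eq_zero hUV
  rw [hCt]
  simp only [projM]
  rw [hB] at hUV' ⊢
  rw [Matrix.inv_sub_inv_add_inv ((isUnit_iff_isUnit_det _).mp hU)
    ((isUnit_iff_isUnit_det _).mp hV) ((isUnit_iff_isUnit_det _).mp hUV')]
  exact Matrix.hausman_identity U V ((isUnit_iff_isUnit_det _).mp hU)
    ((isUnit_iff_isUnit_det _).mp hV) ((isUnit_iff_isUnit_det _).mp hUV')

theorem isStarProjection_projM_add_projM {U V : Matrix (Fin T) ι ℝ} (hUV : Uᵀ * V = 0)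
    (hU : IsUnit (Uᵀ * U)) (hV : IsUnit (Vᵀ * V)) : IsStarProjection (projM U + projM V) :=
  (isStarProjection_projM hU).add (isStarProjection_projM hV) (projM_mul_projM_eq_zero hUV)

theorem isStarProjection_projM_add_projM_sub_projM_add {U V : Matrix (Fin T) ι ℝ}
    (hUV : Uᵀ * V = 0) (hU : IsUnit (Uᵀ * U)) (hV : IsUnit (Vᵀ * V))
    (hUV' : IsUnit ((U + V)ᵀ * (U + V))) :
    IsStarProjection (projM U + projM V - projM (U + V)) := by
  have hVU : Vᵀ * U = 0 := by rw [← transpose_transpose U, ← transpose_mul, hUV, transpose_zero]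
  refine (isStarProjection_projM hUV').sub_of_mul_eq_right
    (isStarProjection_projM_add_projM hUV hU hV) (mul_projM_of_mul_eq ?_)
  rw [Matrix.add_mul, Matrix.mul_add, Matrix.mul_add, projM_mul_self hU, projM_mul_self hV,
    projM_mul_eq_zero hUV, projM_mul_eq_zero hVU, add_zero, zero_add]

end Orthogonal

section Regression

variable {Y : Matrix (Fin T) (Fin G) ℝ} {X₁ : Matrix (Fin T) (Fin k₁) ℝ}
  {X₂ : Matrix (Fin T) (Fin k₂) ℝ}

theorem RankCond.isUnit_gram (h : RankCond Y X₁ X₂) :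
    IsUnit (X₁ᵀ * X₁) ∧ IsUnit ((fromCols X₁ X₂)ᵀ * fromCols X₁ X₂) ∧
      IsUnit ((Zfull Y X₁ X₂)ᵀ * Zfull Y X₁ X₂) ∧ IsUnit ((Ybar Y X₁)ᵀ * Ybar Y X₁) ∧
      IsUnit ((N1 X₁ X₂ * Y)ᵀ * (N1 X₁ X₂ * Y)) ∧ IsUnit ((Mm X₁ X₂ * Y)ᵀ * (Mm X₁ X₂ * Y)) ∧
      IsUnit ((M1 X₁ * Y)ᵀ * (M1 X₁ * Y)) := by
  obtain ⟨hX₁, hX, hZ, hPY⟩ := h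
  have iZ : Function.Injective (Zfull Y X₁ X₂).mulVec :=
    Matrix.mulVec_injective_of_rank_eq (by simpa [Zfull] using hZ)
  have iYbar : Function.Injective (Ybar Y X₁).mulVec :=
    Matrix.mulVec_injective_fromCols_of_fromCols_fromCols iZ
  have iU : Function.Injective (N1 X₁ X₂ * Y).mulVec := by
    rw [N1, Matrix.mul_assoc]
    exact mulVec_injective_annM_mul (Matrix.mulVec_injective_of_rank_eq (by simpa using hPY))
  exact ⟨Matrix.isUnit_transpose_mul_self (Matrix.mulVec_injective_of_rank_eq (by simpa using hX₁)),
    Matrix.isUnit_transpose_mul_self (Matrix.mulVec_injective_of_rank_eq (by simpa using hX)),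
    Matrix.isUnit_transpose_mul_self iZ, Matrix.isUnit_transpose_mul_self iYbar,
    Matrix.isUnit_transpose_mul_self iU,
    Matrix.isUnit_transpose_mul_self (mulVec_injective_annM_mul iZ),
    Matrix.isUnit_transpose_mul_self (mulVec_injective_annM_mul iYbar)⟩

theorem isStarProjection_M1 (hX₁ : IsUnit (X₁ᵀ * X₁)) : IsStarProjection (M1 X₁) :=
  isStarProjection_annM hX₁

theorem isStarProjection_Pm (hX : IsUnit ((fromCols X₁ X₂)ᵀ * fromCols X₁ X₂)) :
    IsStarProjection (Pm X₁ X₂) :=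
  isStarProjection_projM hX

theorem Pm_mul_projM (hX : IsUnit ((fromCols X₁ X₂)ᵀ * fromCols X₁ X₂)) :
    Pm X₁ X₂ * projM X₁ = projM X₁ :=
  mul_projM_of_mul_eq (projM_fromCols_mul_left_and_right hX).1

theorem projM_mul_Pm (hX₁ : IsUnit (X₁ᵀ * X₁))
    (hX : IsUnit ((fromCols X₁ X₂)ᵀ * fromCols X₁ X₂)) :
    projM X₁ * Pm X₁ X₂ = projM X₁ :=
  (isStarProjection_Pm hX).isSelfAdjoint.mul_eq_left_of_mul_eq_right
    (isStarProjection_projM hX₁).isSelfAdjoint (Pm_mul_projM hX)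

theorem N1_eq_Pm_sub_projM (hX₁ : IsUnit (X₁ᵀ * X₁))
    (hX : IsUnit ((fromCols X₁ X₂)ᵀ * fromCols X₁ X₂)) :
    N1 X₁ X₂ = Pm X₁ X₂ - projM X₁ := by
  rw [N1, M1, annM, Matrix.sub_mul, Matrix.one_mul, projM_mul_Pm hX₁ hX]

theorem isStarProjection_N1 (hX₁ : IsUnit (X₁ᵀ * X₁))
    (hX : IsUnit ((fromCols X₁ X₂)ᵀ * fromCols X₁ X₂)) : IsStarProjection (N1 X₁ X₂) := by
  rw [N1_eq_Pm_sub_projM hX₁ hX]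
  exact (isStarProjection_projM hX₁).sub_of_mul_eq_right (isStarProjection_Pm hX)
    (Pm_mul_projM hX)

theorem Mm_eq_one_sub_Pm : Mm X₁ X₂ = 1 - Pm X₁ X₂ := rfl

theorem M1_eq_N1_add_Mm (hX₁ : IsUnit (X₁ᵀ * X₁))
    (hX : IsUnit ((fromCols X₁ X₂)ᵀ * fromCols X₁ X₂)) :
    M1 X₁ = N1 X₁ X₂ + Mm X₁ X₂ := by
  rw [N1_eq_Pm_sub_projM hX₁ hX, Mm_eq_one_sub_Pm, M1, annM]
  abel

theorem N1_mul_Mm (hX₁ : IsUnit (X₁ᵀ * X₁))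
    (hX : IsUnit ((fromCols X₁ X₂)ᵀ * fromCols X₁ X₂)) : N1 X₁ X₂ * Mm X₁ X₂ = 0 := by
  rw [N1_eq_Pm_sub_projM hX₁ hX, Mm_eq_one_sub_Pm, Matrix.sub_mul,
    (isStarProjection_Pm hX).mul_one_sub_self, Matrix.mul_sub, Matrix.mul_one,
    projM_mul_Pm hX₁ hX, sub_self, sub_zero]

theorem transpose_N1_mul_mul_Mm_mul (hX₁ : IsUnit (X₁ᵀ * X₁))
    (hX : IsUnit ((fromCols X₁ X₂)ᵀ * fromCols X₁ X₂)) :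
    (N1 X₁ X₂ * Y)ᵀ * (Mm X₁ X₂ * Y) = 0 := by
  rw [transpose_mul, (isStarProjection_N1 hX₁ hX).transpose_eq, Matrix.mul_assoc,
    ← Matrix.mul_assoc (N1 X₁ X₂), N1_mul_Mm hX₁ hX, Matrix.zero_mul, Matrix.mul_zero]

theorem M1_mul_eq_N1_mul_add_Mm_mul (hX₁ : IsUnit (X₁ᵀ * X₁))
    (hX : IsUnit ((fromCols X₁ X₂)ᵀ * fromCols X₁ X₂)) :
    M1 X₁ * Y = N1 X₁ X₂ * Y + Mm X₁ X₂ * Y := by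
  rw [M1_eq_N1_add_Mm hX₁ hX, Matrix.add_mul]

theorem smul_Psi0_eq (hT : (T : ℝ) ≠ 0) (hX₁ : IsUnit (X₁ᵀ * X₁))
    (hX : IsUnit ((fromCols X₁ X₂)ᵀ * fromCols X₁ X₂))
    (hU : IsUnit ((N1 X₁ X₂ * Y)ᵀ * (N1 X₁ X₂ * Y)))
    (hV : IsUnit ((Mm X₁ X₂ * Y)ᵀ * (Mm X₁ X₂ * Y)))
    (hM1Y : IsUnit ((M1 X₁ * Y)ᵀ * (M1 X₁ * Y))) :
    (T : ℝ) • Psi0 Y X₁ X₂ =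
      projM (N1 X₁ X₂ * Y) + projM (Mm X₁ X₂ * Y) - projM (M1 X₁ * Y) := by
  have hN1 := isStarProjection_N1 hX₁ hX
  have hM1 := isStarProjection_M1 hX₁
  have hC1 : C1 Y X₁ X₂ = ((N1 X₁ X₂ * Y)ᵀ * (N1 X₁ X₂ * Y))⁻¹ * (N1 X₁ X₂ * Y)ᵀ -
      ((M1 X₁ * Y)ᵀ * (M1 X₁ * Y))⁻¹ * (M1 X₁ * Y)ᵀ := by
    rw [C1, B2, B1, hN1.transpose_mul_mul_self, hM1.transpose_mul_mul_self, transpose_mul,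
      transpose_mul, hN1.transpose_eq, hM1.transpose_eq]
  have hDhat : Dhat Y X₁ X₂ = (T : ℝ) •
      (((N1 X₁ X₂ * Y)ᵀ * (N1 X₁ X₂ * Y))⁻¹ - ((M1 X₁ * Y)ᵀ * (M1 X₁ * Y))⁻¹) := by
    rw [Dhat, OmIV, OmLS, Matrix.inv_smul_of_ne_zero (inv_ne_zero hT),
      Matrix.inv_smul_of_ne_zero (inv_ne_zero hT), inv_inv, ← smul_sub,
      hN1.transpose_mul_mul_self, hM1.transpose_mul_mul_self]
  rw [Psi0, hDhat, Matrix.inv_smul_of_ne_zero hT, Matrix.mul_smul, Matrix.smul_mul,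
    smul_inv_smul₀ hT, hC1, M1_mul_eq_N1_mul_add_Mm_mul hX₁ hX]
  rw [M1_mul_eq_N1_mul_add_Mm_mul hX₁ hX] at hM1Y
  exact transpose_mul_inv_sub_inv_inv_mul_eq (transpose_N1_mul_mul_Mm_mul hX₁ hX) hU hV hM1Y

theorem isStarProjection_smul_Psi0 (hT : (T : ℝ) ≠ 0) (hX₁ : IsUnit (X₁ᵀ * X₁))
    (hX : IsUnit ((fromCols X₁ X₂)ᵀ * fromCols X₁ X₂))
    (hU : IsUnit ((N1 X₁ X₂ * Y)ᵀ * (N1 X₁ X₂ * Y)))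
    (hV : IsUnit ((Mm X₁ X₂ * Y)ᵀ * (Mm X₁ X₂ * Y)))
    (hM1Y : IsUnit ((M1 X₁ * Y)ᵀ * (M1 X₁ * Y))) :
    IsStarProjection ((T : ℝ) • Psi0 Y X₁ X₂) := by
  rw [smul_Psi0_eq hT hX₁ hX hU hV hM1Y, M1_mul_eq_N1_mul_add_Mm_mul hX₁ hX]
  rw [M1_mul_eq_N1_mul_add_Mm_mul hX₁ hX] at hM1Y
  exact isStarProjection_projM_add_projM_sub_projM_add (transpose_N1_mul_mul_Mm_mul hX₁ hX)
    hU hV hM1Y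

theorem isStarProjection_smul_Lam1 (hT : (T : ℝ) ≠ 0) (hX₁ : IsUnit (X₁ᵀ * X₁))
    (hX : IsUnit ((fromCols X₁ X₂)ᵀ * fromCols X₁ X₂))
    (hU : IsUnit ((N1 X₁ X₂ * Y)ᵀ * (N1 X₁ X₂ * Y))) :
    IsStarProjection ((T : ℝ) • Lam1 Y X₁ X₂) := by
  have hN1 := isStarProjection_N1 hX₁ hX
  rw [Lam1, smul_inv_smul₀ hT, hN1.mul_annM_mul_self_mul]
  exact hN1.sub_projM_mul hU

theorem isStarProjection_smul_Lam4 (hT : (T : ℝ) ≠ 0) (hX₁ : IsUnit (X₁ᵀ * X₁))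
    (hM1Y : IsUnit ((M1 X₁ * Y)ᵀ * (M1 X₁ * Y))) :
    IsStarProjection ((T : ℝ) • Lam4 Y X₁) := by
  have hM1 := isStarProjection_M1 hX₁
  rw [Lam4, smul_inv_smul₀ hT, hM1.mul_annM_mul_self_mul]
  exact hM1.sub_projM_mul hM1Y

theorem M1_mul_Mm (hX₁ : IsUnit (X₁ᵀ * X₁))
    (hX : IsUnit ((fromCols X₁ X₂)ᵀ * fromCols X₁ X₂)) : M1 X₁ * Mm X₁ X₂ = Mm X₁ X₂ := by
  rw [M1, annM, Mm_eq_one_sub_Pm, Matrix.sub_mul, Matrix.one_mul, Matrix.mul_sub, Matrix.mul_one,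
    projM_mul_Pm hX₁ hX, sub_self, sub_zero]

theorem M1_mul_projM_add_projM (hX₁ : IsUnit (X₁ᵀ * X₁))
    (hX : IsUnit ((fromCols X₁ X₂)ᵀ * fromCols X₁ X₂)) :
    M1 X₁ * (projM (N1 X₁ X₂ * Y) + projM (Mm X₁ X₂ * Y)) =
      projM (N1 X₁ X₂ * Y) + projM (Mm X₁ X₂ * Y) := by
  have hN1 : M1 X₁ * (N1 X₁ X₂ * Y) = N1 X₁ X₂ * Y := by
    rw [N1, ← Matrix.mul_assoc, ← Matrix.mul_assoc, (isStarProjection_M1 hX₁).isIdempotentElem.eq]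
  have hMm : M1 X₁ * (Mm X₁ X₂ * Y) = Mm X₁ X₂ * Y := by
    rw [← Matrix.mul_assoc, M1_mul_Mm hX₁ hX]
  rw [Matrix.mul_add, mul_projM_of_mul_eq hN1, mul_projM_of_mul_eq hMm]

theorem isStarProjection_smul_Lam2 (hT : (T : ℝ) ≠ 0) (hX₁ : IsUnit (X₁ᵀ * X₁))
    (hX : IsUnit ((fromCols X₁ X₂)ᵀ * fromCols X₁ X₂))
    (hU : IsUnit ((N1 X₁ X₂ * Y)ᵀ * (N1 X₁ X₂ * Y)))
    (hV : IsUnit ((Mm X₁ X₂ * Y)ᵀ * (Mm X₁ X₂ * Y)))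
    (hM1Y : IsUnit ((M1 X₁ * Y)ᵀ * (M1 X₁ * Y))) :
    IsStarProjection ((T : ℝ) • Lam2 Y X₁ X₂) := by
  have hM1 := isStarProjection_M1 hX₁
  have hUV := isStarProjection_projM_add_projM (transpose_N1_mul_mul_Mm_mul hX₁ hX) hU hV
  have hLam2 : (T : ℝ) • Lam2 Y X₁ X₂ =
      M1 X₁ * (1 - (projM (N1 X₁ X₂ * Y) + projM (Mm X₁ X₂ * Y))) * M1 X₁ := by
    rw [Lam2, ← Matrix.smul_mul, ← Matrix.mul_smul, smul_sub, smul_inv_smul₀ hT,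
      smul_Psi0_eq hT hX₁ hX hU hV hM1Y, annM]
    abel_nf
  rw [hLam2, hM1.mul_one_sub_mul_eq_sub hUV.isSelfAdjoint (M1_mul_projM_add_projM hX₁ hX)]
  exact hUV.sub_of_mul_eq_right hM1 (M1_mul_projM_add_projM hX₁ hX)

theorem isStarProjection_smul_PsiR (hT : (T : ℝ) ≠ 0)
    (hZ : IsUnit ((Zfull Y X₁ X₂)ᵀ * Zfull Y X₁ X₂))
    (hYbar : IsUnit ((Ybar Y X₁)ᵀ * Ybar Y X₁)) :
    IsStarProjection ((T : ℝ) • PsiR Y X₁ X₂) := by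
  obtain ⟨hY, hX⟩ := projM_fromCols_mul_left_and_right hZ
  rw [mul_fromCols, fromCols_inj.eq_iff] at hX
  have hZYbar : projM (Zfull Y X₁ X₂) * Ybar Y X₁ = Ybar Y X₁ := by
    rw [Ybar, mul_fromCols, Zfull, hY, hX.1]
  rw [PsiR, smul_inv_smul₀ hT, annM, annM, sub_sub_sub_cancel_left]
  exact (isStarProjection_projM hYbar).sub_of_mul_eq_right (isStarProjection_projM hZ)
    (mul_projM_of_mul_eq hZYbar)

theorem isStarProjection_smul_LamR (hT : (T : ℝ) ≠ 0)
    (hZ : IsUnit ((Zfull Y X₁ X₂)ᵀ * Zfull Y X₁ X₂)) :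
    IsStarProjection ((T : ℝ) • LamR Y X₁ X₂) := by
  rw [LamR, smul_inv_smul₀ hT]
  exact isStarProjection_annM hZ

end Regression

theorem stmt10_general {T G k₁ k₂ : ℕ}
    (hT : 0 < T)
    (Y : Matrix (Fin T) (Fin G) ℝ)
    (X₁ : Matrix (Fin T) (Fin k₁) ℝ) (X₂ : Matrix (Fin T) (Fin k₂) ℝ)
    (hrank : RankCond Y X₁ X₂) :
    ((T : ℝ) • Psi0 Y X₁ X₂).IsSymm ∧
    ((T : ℝ) • Psi0 Y X₁ X₂) * ((T : ℝ) • Psi0 Y X₁ X₂) = (T : ℝ) • Psi0 Y X₁ X₂ ∧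
    ((T : ℝ) • Lam1 Y X₁ X₂).IsSymm ∧
    ((T : ℝ) • Lam1 Y X₁ X₂) * ((T : ℝ) • Lam1 Y X₁ X₂) = (T : ℝ) • Lam1 Y X₁ X₂ ∧
    ((T : ℝ) • Lam2 Y X₁ X₂).IsSymm ∧
    ((T : ℝ) • Lam2 Y X₁ X₂) * ((T : ℝ) • Lam2 Y X₁ X₂) = (T : ℝ) • Lam2 Y X₁ X₂ ∧
    ((T : ℝ) • Lam4 Y X₁).IsSymm ∧
    ((T : ℝ) • Lam4 Y X₁) * ((T : ℝ) • Lam4 Y X₁) = (T : ℝ) • Lam4 Y X₁ ∧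
    ((T : ℝ) • PsiR Y X₁ X₂).IsSymm ∧
    ((T : ℝ) • PsiR Y X₁ X₂) * ((T : ℝ) • PsiR Y X₁ X₂) = (T : ℝ) • PsiR Y X₁ X₂ ∧
    ((T : ℝ) • LamR Y X₁ X₂).IsSymm ∧
    ((T : ℝ) • LamR Y X₁ X₂) * ((T : ℝ) • LamR Y X₁ X₂) = (T : ℝ) • LamR Y X₁ X₂ := by
  have hT' : (T : ℝ) ≠ 0 := by exact_mod_cast hT.ne'
  obtain ⟨hX₁, hX, hZ, hYbar, hU, hV, hM1Y⟩ := hrank.isUnit_gram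
  have hPsi0 := isStarProjection_smul_Psi0 hT' hX₁ hX hU hV hM1Y
  have hLam1 := isStarProjection_smul_Lam1 hT' hX₁ hX hU
  have hLam2 := isStarProjection_smul_Lam2 hT' hX₁ hX hU hV hM1Y
  have hLam4 := isStarProjection_smul_Lam4 hT' hX₁ hM1Y
  have hPsiR := isStarProjection_smul_PsiR hT' hZ hYbar
  have hLamR := isStarProjection_smul_LamR hT' hZ
  exact ⟨hPsi0.transpose_eq, hPsi0.isIdempotentElem.eq, hLam1.transpose_eq,
    hLam1.isIdempotentElem.eq, hLam2.transpose_eq, hLam2.isIdempotentElem.eq,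
    hLam4.transpose_eq, hLam4.isIdempotentElem.eq, hPsiR.transpose_eq,
    hPsiR.isIdempotentElem.eq, hLamR.transpose_eq, hLamR.isIdempotentElem.eq⟩

/-- Under the rank condition, each of `TΨ₀`, `TΛ₁`, `TΛ₂`, `TΛ₄`, `TΨ_R` and `TΛ_R`
is symmetric and idempotent. -/
theorem stmt10 {T G k₁ k₂ : ℕ}
    (hT : 0 < T) (hG : 0 < G) (hk₁ : 0 < k₁) (hk₂ : 0 < k₂)
    (Y : Matrix (Fin T) (Fin G) ℝ)
    (X₁ : Matrix (Fin T) (Fin k₁) ℝ) (X₂ : Matrix (Fin T) (Fin k₂) ℝ)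
    (hrank : RankCond Y X₁ X₂) :
    ((T : ℝ) • Psi0 Y X₁ X₂).IsSymm ∧
    ((T : ℝ) • Psi0 Y X₁ X₂) * ((T : ℝ) • Psi0 Y X₁ X₂) = (T : ℝ) • Psi0 Y X₁ X₂ ∧
    ((T : ℝ) • Lam1 Y X₁ X₂).IsSymm ∧
    ((T : ℝ) • Lam1 Y X₁ X₂) * ((T : ℝ) • Lam1 Y X₁ X₂) = (T : ℝ) • Lam1 Y X₁ X₂ ∧
    ((T : ℝ) • Lam2 Y X₁ X₂).IsSymm ∧
    ((T : ℝ) • Lam2 Y X₁ X₂) * ((T : ℝ) • Lam2 Y X₁ X₂) = (T : ℝ) • Lam2 Y X₁ X₂ ∧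
    ((T : ℝ) • Lam4 Y X₁).IsSymm ∧
    ((T : ℝ) • Lam4 Y X₁) * ((T : ℝ) • Lam4 Y X₁) = (T : ℝ) • Lam4 Y X₁ ∧
    ((T : ℝ) • PsiR Y X₁ X₂).IsSymm ∧
    ((T : ℝ) • PsiR Y X₁ X₂) * ((T : ℝ) • PsiR Y X₁ X₂) = (T : ℝ) • PsiR Y X₁ X₂ ∧
    ((T : ℝ) • LamR Y X₁ X₂).IsSymm ∧
    ((T : ℝ) • LamR Y X₁ X₂) * ((T : ℝ) • LamR Y X₁ X₂) = (T : ℝ) • LamR Y X₁ X₂ :=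
  stmt10_general hT Y X₁ X₂ hrank
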